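/- Assume the Lagrange stability conditions I₁ > I₃ > I₂ together with I₁ + I₂ + I₃ = 1 and I₁,I₂,I₃ ∈ (0,1/2); then I₁ > 1/3 > I₂. Define p(R) = 2R⁴ + (9I₂ − 6I₁ − 3)R² − 15I₁ + 45I₁I₂. Then p has a unique positive root R_crit; moreover p(R) > 0 for all R > R_crit, p(R) < 0 for all 0 < R < R_crit, and R_crit < 2. In addition, for every R > 0 one has I₁ − I₃ > 0, 1 + (I₁ − I₂)/R² > 0, I₃ − I₂ > 0, 8R² + 6I₁ + 3 − 15I₂ > 0, and (I₁ − I₂)(1 + (I₁ − I₂)/R²)(8R² + 6I₁ + 3 − 15I₂) > 0. -/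

import Mathlib

/-!
`p(R) = q(R²)` for the quadratic `q(x) = 2x² + (9I₂ − 6I₁ − 3)x + 15I₁(3I₂ − 1)`,
whose constant term is negative because `I₂ < 1/3`. Hence `q` has one positive and one negative
root, `q(x) = 2(x − r)(x + s)` with `r, s > 0`, and on `R > 0` the sign of `p(R)` is the sign of
`R − √r`. Finally `p(2) > 0` since `I₁ < 1/2`, so `√r < 2`.
-/

noncomputable section

/-- The Smale-form eigenvalue polynomial `p(R) = 2R⁴ + (9I₂ − 6I₁ − 3)R² − 15I₁ + 45I₁I₂`. -/
def pPoly (I₁ I₂ : ℝ) (R : ℝ) : ℝ :=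
  2 * R ^ 4 + (9 * I₂ - 6 * I₁ - 3) * R ^ 2 - 15 * I₁ + 45 * I₁ * I₂

theorem exists_quadratic_eq_mul_sub_mul_add {a b c : ℝ} (ha : 0 < a) (hc : c < 0) :
    ∃ r s : ℝ, 0 < r ∧ 0 < s ∧ ∀ x, a * x ^ 2 + b * x + c = a * (x - r) * (x + s) := by
  set d := √(b ^ 2 - 4 * a * c)
  have hd_sq : d ^ 2 = b ^ 2 - 4 * a * c := Real.sq_sqrt (by nlinarith [sq_nonneg b])
  have hd_gt_abs : |b| < d := by
    apply abs_lt_of_sq_lt_sq _ (Real.sqrt_nonneg _)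
    nlinarith
  obtain ⟨hbd, hdb⟩ := abs_lt.mp hd_gt_abs
  refine ⟨(d - b) / (2 * a), (d + b) / (2 * a), div_pos (by linarith) (by positivity),
    div_pos (by linarith) (by positivity), fun x => ?_⟩
  field_simp
  linear_combination hd_sq

theorem exists_sign_biquadratic_eq_sign_sub {a b c : ℝ} (ha : 0 < a) (hc : c < 0) :
    ∃ ρ : ℝ, 0 < ρ ∧ ∀ R, 0 < R →
      SignType.sign (a * R ^ 4 + b * R ^ 2 + c) = SignType.sign (R - ρ) := by
  obtain ⟨r, s, hr, hs, hfac⟩ := exists_quadratic_eq_mul_sub_mul_add (b := b) ha hc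
  refine ⟨√r, Real.sqrt_pos.mpr hr, fun R hR => ?_⟩
  have hfac4 : a * R ^ 4 + b * R ^ 2 + c = a * (R - √r) * ((R + √r) * (R ^ 2 + s)) := by
    linear_combination hfac (R ^ 2) + a * (R ^ 2 + s) * Real.sq_sqrt hr.le
  have hpos : 0 < (R + √r) * (R ^ 2 + s) := by positivity
  rw [hfac4, sign_mul, sign_mul, sign_pos ha, sign_pos hpos, one_mul, mul_one]

theorem pPoly_eq (I₁ I₂ R : ℝ) :
    pPoly I₁ I₂ R = 2 * R ^ 4 + (9 * I₂ - 6 * I₁ - 3) * R ^ 2 + 15 * I₁ * (3 * I₂ - 1) := by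
  unfold pPoly
  ring

theorem pPoly_two_pos {I₁ I₂ : ℝ} (hI₁ : 0 < I₁) (hI₁' : I₁ < 1 / 2) (hI₂ : 0 < I₂) :
    0 < pPoly I₁ I₂ 2 := by
  unfold pPoly
  nlinarith [mul_pos hI₁ hI₂]

theorem stmt6_general (I₁ I₂ I₃ : ℝ)
    (hI₁ : 0 < I₁) (hI₁' : I₁ < 1 / 2)
    (hI₂ : 0 < I₂)
    (hsum : I₁ + I₂ + I₃ = 1)
    (hL1 : I₁ > I₃) (hL2 : I₃ > I₂) :
    I₁ > 1 / 3 ∧ I₂ < 1 / 3 ∧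
    (∃ Rcrit : ℝ, 0 < Rcrit ∧ pPoly I₁ I₂ Rcrit = 0 ∧
      (∀ R : ℝ, 0 < R → pPoly I₁ I₂ R = 0 → R = Rcrit) ∧
      (∀ R : ℝ, R > Rcrit → pPoly I₁ I₂ R > 0) ∧
      (∀ R : ℝ, 0 < R → R < Rcrit → pPoly I₁ I₂ R < 0) ∧
      Rcrit < 2) ∧
    (∀ R : ℝ, 0 < R →
      I₁ - I₃ > 0 ∧
      1 + (I₁ - I₂) / R ^ 2 > 0 ∧
      I₃ - I₂ > 0 ∧
      8 * R ^ 2 + 6 * I₁ + 3 - 15 * I₂ > 0 ∧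
      (I₁ - I₂) * (1 + (I₁ - I₂) / R ^ 2) * (8 * R ^ 2 + 6 * I₁ + 3 - 15 * I₂) > 0) := by
  have h₁ : I₁ > 1 / 3 := by linarith
  have h₂ : I₂ < 1 / 3 := by linarith
  obtain ⟨ρ, hρ, hsign⟩ := exists_sign_biquadratic_eq_sign_sub (b := 9 * I₂ - 6 * I₁ - 3)
    two_pos (show 15 * I₁ * (3 * I₂ - 1) < 0 by nlinarith)
  simp only [← pPoly_eq] at hsign
  refine ⟨h₁, h₂, ⟨ρ, hρ, ?_, ?_, ?_, ?_, ?_⟩, fun R hR => ?_⟩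
  · exact sign_eq_zero_iff.mp (by rw [hsign ρ hρ, sub_self, sign_zero])
  · intro R hR hp
    have h := hsign R hR
    rwa [hp, sign_zero, eq_comm, sign_eq_zero_iff, sub_eq_zero] at h
  · intro R hR
    exact sign_eq_one_iff.mp (by rw [hsign R (hρ.trans hR), sign_pos (sub_pos.mpr hR)])
  · intro R hR hRρ
    exact sign_eq_neg_one_iff.mp (by rw [hsign R hR, sign_neg (sub_neg.mpr hRρ)])
  · have h := hsign 2 two_pos
    rwa [sign_pos (pPoly_two_pos hI₁ hI₁' hI₂), eq_comm, sign_eq_one_iff, sub_pos] at h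
  have hdiv : 0 < (I₁ - I₂) / R ^ 2 := by have := sub_pos.mpr (hL1.trans' hL2); positivity
  have hlin : 8 * R ^ 2 + 6 * I₁ + 3 - 15 * I₂ > 0 := by nlinarith [sq_nonneg R]
  refine ⟨by linarith, by linarith, by linarith, hlin, ?_⟩
  exact mul_pos (mul_pos (by linarith) (by linarith)) hlin

theorem stmt6 (I₁ I₂ I₃ : ℝ)
    (hI₁ : 0 < I₁) (hI₁' : I₁ < 1 / 2)
    (hI₂ : 0 < I₂) (hI₂' : I₂ < 1 / 2)
    (hI₃ : 0 < I₃) (hI₃' : I₃ < 1 / 2)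
    (hsum : I₁ + I₂ + I₃ = 1)
    (hL1 : I₁ > I₃) (hL2 : I₃ > I₂) :
    I₁ > 1 / 3 ∧ I₂ < 1 / 3 ∧
    (∃ Rcrit : ℝ, 0 < Rcrit ∧ pPoly I₁ I₂ Rcrit = 0 ∧
      (∀ R : ℝ, 0 < R → pPoly I₁ I₂ R = 0 → R = Rcrit) ∧
      (∀ R : ℝ, R > Rcrit → pPoly I₁ I₂ R > 0) ∧
      (∀ R : ℝ, 0 < R → R < Rcrit → pPoly I₁ I₂ R < 0) ∧
      Rcrit < 2) ∧
    (∀ R : ℝ, 0 < R →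
      I₁ - I₃ > 0 ∧
      1 + (I₁ - I₂) / R ^ 2 > 0 ∧
      I₃ - I₂ > 0 ∧
      8 * R ^ 2 + 6 * I₁ + 3 - 15 * I₂ > 0 ∧
      (I₁ - I₂) * (1 + (I₁ - I₂) / R ^ 2) * (8 * R ^ 2 + 6 * I₁ + 3 - 15 * I₂) > 0) :=
  stmt6_general I₁ I₂ I₃ hI₁ hI₁' hI₂ hsum hL1 hL2
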